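/- (Exponentially convergent trapezoidal rule for annulus-analytic functions.) Let η > 1 and let h be holomorphic and bounded by Λ on the open annulus A_η = {z ∈ ℂ : 1/η < |z| < η}. Define g(θ) = h(e^{iθ}). Then for every M ∈ ℕ, |(2π/M)·Σ_{k=1}^{M} g(2πk/M) − ∫_0^{2π} g(θ) dθ| ≤ 4πΛ/(η^M − 1). -/

import Mathlib

open scoped Real
open Complex Set Metric

noncomputable def zet (M k : ℕ) : ℂ := Complex.exp ((2 * π * k / M : ℝ) * Complex.I)

lemma zet_abs (M k : ℕ) : ‖zet M k‖ = 1 := Complex.norm_exp_ofReal_mul_I _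

lemma zet_ne_zero (M k : ℕ) : zet M k ≠ 0 := Complex.exp_ne_zero _

lemma zet_pow (M : ℕ) (hM : 0 < M) (k : ℕ) : zet M k ^ M = 1 := by
  rw [zet, ← Complex.exp_nat_mul]
  have hM' : (M : ℂ) ≠ 0 := Nat.cast_ne_zero.mpr hM.ne'
  have : (M : ℂ) * (((2 * π * k / M : ℝ)) * Complex.I) = (k : ℤ) * (2 * π * Complex.I) := by
    push_cast
    field_simp
  rw [this, Complex.exp_int_mul_two_pi_mul_I]

lemma zet_sum_pow (M : ℕ) (hM : 0 < M) {m : ℕ} (h1 : 0 < m) (h2 : m < M) :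
    ∑ k ∈ Finset.Icc 1 M, zet M k ^ m = 0 := by
  have hM' : (M : ℂ) ≠ 0 := Nat.cast_ne_zero.mpr hM.ne'
  set ω : ℂ := Complex.exp ((2 * π * m / M : ℝ) * Complex.I) with hω
  have hpow : ∀ k, zet M k ^ m = ω ^ k := by
    intro k
    rw [zet, hω, ← Complex.exp_nat_mul, ← Complex.exp_nat_mul]
    congr 1
    push_cast
    ring
  have hωM : ω ^ M = 1 := by
    rw [hω, ← Complex.exp_nat_mul]
    have : (M : ℂ) * (((2 * π * m / M : ℝ)) * Complex.I) = (m : ℤ) * (2 * π * Complex.I) := by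
      push_cast
      field_simp
    rw [this, Complex.exp_int_mul_two_pi_mul_I]
  have hω1 : ω ≠ 1 := by
    intro hc
    rw [hω, Complex.exp_eq_one_iff] at hc
    obtain ⟨n, hn⟩ := hc
    have hn' : ((2 * π * m / M : ℝ) : ℂ) = (((n : ℝ) * (2 * π) : ℝ) : ℂ) := by
      apply mul_right_cancel₀ Complex.I_ne_zero
      rw [hn]; push_cast; ring
    have hr : (2 * π * m / M : ℝ) = (n : ℝ) * (2 * π) := by exact_mod_cast hn'
    have hMr : (0:ℝ) < M := Nat.cast_pos.mpr hM
    have hπ : (0:ℝ) < π := Real.pi_pos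
    have hmn : (m : ℝ) = (n : ℝ) * M := by
      field_simp at hr
      nlinarith [hr]
    have h1' : (0:ℝ) < (m:ℝ) := Nat.cast_pos.mpr h1
    have h2' : (m:ℝ) < M := Nat.cast_lt.mpr h2
    have hn0 : (0:ℝ) < n := by nlinarith
    have hn1 : (n:ℝ) < 1 := by nlinarith
    have hge : (1:ℤ) ≤ n := by exact_mod_cast hn0
    have : (n:ℝ) ≥ 1 := by exact_mod_cast hge
    linarith
  have hIcc : Finset.Icc 1 M = Finset.Ioc 0 M := by
    ext x; simp [Nat.lt_iff_add_one_le]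
  have hins : insert 0 (Finset.Ioc 0 M) = Finset.range (M + 1) := by
    ext x
    simp only [Finset.mem_insert, Finset.mem_Ioc, Finset.mem_range, Nat.lt_succ_iff]
    omega
  have hsum : ∑ k ∈ Finset.range (M+1), ω ^ k = 1 := by
    rw [geom_sum_eq hω1, pow_succ, hωM, one_mul]
    rw [div_eq_one_iff_eq (sub_ne_zero.mpr hω1)]
  have hsplit : ∑ k ∈ Finset.range (M+1), ω ^ k = ω ^ 0 + ∑ k ∈ Finset.Ioc 0 M, ω ^ k := by
    rw [← hins, Finset.sum_insert (by simp)]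
  have h0 : ∑ k ∈ Finset.Ioc 0 M, ω ^ k = 0 := by
    have := hsplit.symm.trans hsum
    simpa using sub_eq_zero.mpr this |>.symm ▸ (by linear_combination this : ∑ k ∈ Finset.Ioc 0 M, ω ^ k = 0)
  rw [hIcc]
  calc ∑ k ∈ Finset.Ioc 0 M, zet M k ^ m = ∑ k ∈ Finset.Ioc 0 M, ω ^ k :=
        Finset.sum_congr rfl fun k _ => hpow k
    _ = 0 := h0

lemma zet_sum_pow_M (M : ℕ) (hM : 0 < M) :
    ∑ k ∈ Finset.Icc 1 M, zet M k ^ M = M := by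
  rw [Finset.sum_congr rfl fun k _ => zet_pow M hM k]
  simp

lemma partial_fractions (M : ℕ) (hM : 0 < M) {z : ℂ}
    (hz : ∀ k ∈ Finset.Icc 1 M, z ≠ zet M k) (hzM : z ^ M ≠ 1) :
    ∑ k ∈ Finset.Icc 1 M, zet M k / (z - zet M k) = (M : ℂ) / (z ^ M - 1) := by
  have hne : z ^ M - 1 ≠ 0 := sub_ne_zero.mpr hzM
  rw [eq_div_iff hne, Finset.sum_mul]
  have key : ∀ k ∈ Finset.Icc 1 M,
      zet M k / (z - zet M k) * (z ^ M - 1)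
        = ∑ j ∈ Finset.range M, zet M k ^ (M - j) * z ^ j := by
    intro k hk
    have hzk : z - zet M k ≠ 0 := sub_ne_zero.mpr (hz k hk)
    have hgeom : (∑ j ∈ Finset.range M, z ^ j * zet M k ^ (M - 1 - j)) * (z - zet M k)
        = z ^ M - 1 := by
      rw [geom_sum₂_mul, zet_pow M hM]
    have step1 : zet M k / (z - zet M k) * (z ^ M - 1)
        = zet M k * ∑ j ∈ Finset.range M, z ^ j * zet M k ^ (M - 1 - j) := by
      rw [← hgeom]; field_simp
    rw [step1, Finset.mul_sum]
    refine Finset.sum_congr rfl fun j hj => ?_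
    have hjM : j < M := Finset.mem_range.mp hj
    have harith : M - 1 - j + 1 = M - j := by omega
    calc zet M k * (z ^ j * zet M k ^ (M - 1 - j))
        = zet M k ^ (M - 1 - j) * zet M k * z ^ j := by ring
      _ = zet M k ^ (M - 1 - j + 1) * z ^ j := by rw [pow_succ]
      _ = zet M k ^ (M - j) * z ^ j := by rw [harith]
  rw [Finset.sum_congr rfl key, Finset.sum_comm]
  have inner : ∀ j ∈ Finset.range M,
      ∑ k ∈ Finset.Icc 1 M, zet M k ^ (M - j) * z ^ j
        = (if j = 0 then (M : ℂ) else 0) * z ^ j := by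
    intro j hj
    have hjM : j < M := Finset.mem_range.mp hj
    rw [← Finset.sum_mul]
    congr 1
    by_cases h0 : j = 0
    · subst h0; simp only [Nat.sub_zero, if_pos rfl]; exact zet_sum_pow_M M hM
    · rw [if_neg h0]
      exact zet_sum_pow M hM (by omega) (by omega)
  rw [Finset.sum_congr rfl inner]
  rw [Finset.sum_eq_single 0 (fun b _ hb => by rw [if_neg hb, zero_mul])
    (fun hn => absurd (Finset.mem_range.mpr hM) hn)]
  simp

lemma circleIntegral_finset_sum {ι : Type*} (t : Finset ι) (f : ι → ℂ → ℂ) (c : ℂ) (R : ℝ)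
    (h : ∀ i ∈ t, CircleIntegrable (f i) c R) :
    (∮ z in C(c, R), ∑ i ∈ t, f i z) = ∑ i ∈ t, ∮ z in C(c, R), f i z := by
  simp only [circleIntegral, Finset.smul_sum]
  exact intervalIntegral.integral_finset_sum fun i hi => (h i hi).out

lemma two_circles {f : ℂ → ℂ} {U : Set ℂ} (hU : IsOpen U) (hf : DifferentiableOn ℂ f U)
    {s r : ℝ} (hs : 0 < s) (hsr : s ≤ r) (hsub : closedBall (0:ℂ) r \ ball 0 s ⊆ U)
    {a : ℂ} (has : s < ‖a‖) (har : ‖a‖ < r) :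
    (∮ z in C(0, r), (z - a)⁻¹ * f z) - (∮ z in C(0, s), (z - a)⁻¹ * f z)
      = 2 * π * Complex.I * f a := by
  have habs : ∀ z : ℂ, ‖z‖ = ‖z‖ := fun z => rfl
  have haU : a ∈ U := hsub ⟨by
      simpa [mem_closedBall, Complex.dist_eq] using har.le,
      by simpa [mem_ball, Complex.dist_eq, not_lt] using has.le⟩
  have hF : DifferentiableOn ℂ (dslope f a) U :=
    (Complex.differentiableOn_dslope (hU.mem_nhds haU)).mpr hf
  have hsub2 : ball (0:ℂ) r \ closedBall 0 s ⊆ U := fun z hz =>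
    hsub ⟨ball_subset_closedBall hz.1, fun hc => hz.2 (ball_subset_closedBall hc)⟩
  have heq : (∮ z in C(0, r), dslope f a z) = ∮ z in C(0, s), dslope f a z :=
    Complex.circleIntegral_eq_of_differentiable_on_annulus_off_countable hs hsr
      Set.countable_empty (hF.continuousOn.mono hsub)
      (fun z hz => hF.differentiableAt (hU.mem_nhds (hsub2 hz.1)))
  -- expansion on a circle of radius ρ ∈ {s, r}
  have expand : ∀ ρ : ℝ, 0 < ρ → s ≤ ρ → ρ ≤ r → ‖a‖ ≠ ρ →
      (∮ z in C(0, ρ), dslope f a z)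
        = (∮ z in C(0, ρ), (z - a)⁻¹ * f z) - f a * ∮ z in C(0, ρ), (z - a)⁻¹ := by
    intro ρ hρ hsρ hρr hne
    have hsph : sphere (0:ℂ) ρ ⊆ U := by
      intro z hz
      have : ‖z‖ = ρ := by simpa [Complex.dist_eq] using hz
      exact hsub ⟨by simpa [mem_closedBall, Complex.dist_eq, this], by
        simp [mem_ball, Complex.dist_eq, this, not_lt, hsρ]⟩
    have hza : ∀ z ∈ sphere (0:ℂ) ρ, z ≠ a := by
      intro z hz hc
      have : ‖z‖ = ρ := by simpa [Complex.dist_eq] using hz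
      exact hne (hc ▸ this)
    have hcongr : Set.EqOn (dslope f a)
        (fun z => (z - a)⁻¹ * f z - f a * (z - a)⁻¹) (sphere (0:ℂ) ρ) := by
      intro z hz
      rw [dslope_of_ne f (hza z hz), slope_def_field]
      field_simp [sub_ne_zero.mpr (hza z hz)]
    have hcf : ContinuousOn f (sphere (0:ℂ) ρ) := hf.continuousOn.mono hsph
    have hcinv : ContinuousOn (fun z : ℂ => (z - a)⁻¹) (sphere (0:ℂ) ρ) :=
      ((continuousOn_id.sub continuousOn_const).inv₀ fun z hz => sub_ne_zero.mpr (hza z hz))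
    have hint1 : CircleIntegrable (fun z : ℂ => (z - a)⁻¹ * f z) 0 ρ :=
      (hcinv.mul hcf).circleIntegrable hρ.le
    have hint2 : CircleIntegrable (fun z : ℂ => f a * (z - a)⁻¹) 0 ρ :=
      (continuousOn_const.mul hcinv).circleIntegrable hρ.le
    rw [circleIntegral.integral_congr hρ.le hcongr,
      circleIntegral.integral_sub hint1 hint2, circleIntegral.integral_const_mul]
  have h1 := expand r (hs.trans_le hsr) hsr le_rfl har.ne
  have h2 := expand s hs le_rfl hsr has.ne'
  have hin : (∮ z in C(0, r), (z - a)⁻¹) = 2 * π * Complex.I :=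
    circleIntegral.integral_sub_inv_of_mem_ball (by simpa [mem_ball, Complex.dist_eq] using har)
  have hout : (∮ z in C(0, s), (z - a)⁻¹) = 0 := by
    apply Complex.circleIntegral_eq_zero_of_differentiable_on_off_countable hs.le
      Set.countable_empty
    · intro z hz
      have hzs : ‖z‖ ≤ s := by simpa [mem_closedBall, Complex.dist_eq] using hz
      exact ((continuousAt_id.sub continuousAt_const).inv₀
        (sub_ne_zero.mpr (fun hc => absurd ((show z = a from hc) ▸ hzs) (not_le.mpr has)))).continuousWithinAt
    · intro z hz
      have hzs : ‖z‖ < s := by simpa [mem_ball, Complex.dist_eq] using hz.1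
      exact (differentiableAt_id.sub_const a).inv
        (sub_ne_zero.mpr (fun hc => absurd (hc ▸ hzs) (not_lt.mpr has.le)))
  rw [h1, h2, hin, hout] at heq
  linear_combination heq

lemma circle_param (f : ℂ → ℂ) :
    (∮ z in C((0:ℂ), 1), z⁻¹ * f z)
      = Complex.I * ∫ θ in (0:ℝ)..(2*π), f (Complex.exp (θ * Complex.I)) := by
  rw [← intervalIntegral.integral_const_mul]
  simp only [circleIntegral, deriv_circleMap, circleMap, ofReal_one, one_mul, zero_add,
    smul_eq_mul]
  refine intervalIntegral.integral_congr fun θ _ => ?_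
  have hne : Complex.exp (θ * Complex.I) ≠ 0 := Complex.exp_ne_zero _
  field_simp

lemma scal_outer (p r Λ : ℝ) (M : ℕ) (hr0 : 0 < r) (hrM : 1 < r ^ M) :
    2 * p * r * ((r ^ M - 1)⁻¹ * (r⁻¹ * Λ)) = 2 * p * Λ / (r ^ M - 1) := by
  have h1 : r ^ M - 1 ≠ 0 := by linarith
  field_simp

lemma scal_inner (p r Λ : ℝ) (M : ℕ) (hr0 : 0 < r) (hrM : 1 < r ^ M) :
    2 * p * r⁻¹ * ((r⁻¹) ^ M * (1 - (r⁻¹) ^ M)⁻¹ * ((r⁻¹)⁻¹ * Λ)) = 2 * p * Λ / (r ^ M - 1) := by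
  have hrM0 : (0:ℝ) < r ^ M := by positivity
  have h1 : r ^ M - 1 ≠ 0 := by linarith
  have h2 : (1 - (r⁻¹) ^ M) = (r ^ M - 1) / r ^ M := by
    rw [inv_pow]
    field_simp
  rw [h2, inv_pow]
  field_simp

lemma key_bound (η Λ : ℝ) (hη : 1 < η) (h : ℂ → ℂ)
    (hhol : DifferentiableOn ℂ h
      {z : ℂ | 1 / η < ‖z‖ ∧ ‖z‖ < η})
    (hbd : ∀ z : ℂ, 1 / η < ‖z‖ → ‖z‖ < η →
      ‖h z‖ ≤ Λ)
    (M : ℕ) (hM : 0 < M) {r : ℝ} (hr1 : 1 < r) (hrη : r < η) :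
    ‖(2 * π / M) * ∑ k ∈ Finset.Icc 1 M, h (zet M k) -
        ∫ θ in (0:ℝ)..(2 * π), h (Complex.exp (θ * Complex.I))‖ ≤
      4 * π * Λ / (r ^ M - 1) := by
  have hπ : (0:ℝ) < π := Real.pi_pos
  have hη0 : (0:ℝ) < η := by linarith
  have hr0 : (0:ℝ) < r := by linarith
  set U : Set ℂ := {z : ℂ | 1 / η < ‖z‖ ∧ ‖z‖ < η} with hU
  have hUopen : IsOpen U := by
    have : U = (fun z : ℂ => ‖z‖) ⁻¹' Set.Ioo (1/η) η := rfl
    rw [this]; exact isOpen_Ioo.preimage continuous_norm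
  set s : ℝ := r⁻¹ with hsdef
  have hs0 : 0 < s := inv_pos.mpr hr0
  have hs1 : s < 1 := inv_lt_one_of_one_lt₀ hr1
  have hsη : 1/η < s := by
    rw [hsdef, one_div]
    exact inv_strictAnti₀ hr0 hrη
  have hsr : s ≤ r := by nlinarith
  have hrM : 1 < r ^ M := one_lt_pow₀ hr1 hM.ne'
  have hsM : s ^ M < 1 := pow_lt_one₀ hs0.le hs1 hM.ne'
  have hsM0 : 0 < s ^ M := pow_pos hs0 M
  -- membership facts
  have habs_sphere : ∀ {ρ : ℝ} {z : ℂ}, z ∈ sphere (0:ℂ) ρ → ‖z‖ = ρ := by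
    intro ρ z hz
    simpa [Complex.dist_eq] using hz
  have hsphU : ∀ {ρ : ℝ}, 1/η < ρ → ρ < η → sphere (0:ℂ) ρ ⊆ U := by
    intro ρ h1 h2 z hz
    rw [hU]
    exact ⟨(habs_sphere hz).symm ▸ h1, (habs_sphere hz).symm ▸ h2⟩
  have hsubr : closedBall (0:ℂ) r \ ball 0 s ⊆ U := by
    intro z hz
    obtain ⟨h1, h2⟩ := hz
    rw [mem_closedBall, Complex.dist_eq, sub_zero] at h1
    rw [mem_ball, Complex.dist_eq, sub_zero, not_lt] at h2
    exact ⟨lt_of_lt_of_le hsη h2, lt_of_le_of_lt h1 hrη⟩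
  have hsub1 : closedBall (0:ℂ) 1 \ ball 0 s ⊆ U := by
    intro z hz
    obtain ⟨h1, h2⟩ := hz
    rw [mem_closedBall, Complex.dist_eq, sub_zero] at h1
    rw [mem_ball, Complex.dist_eq, sub_zero, not_lt] at h2
    exact ⟨lt_of_lt_of_le hsη h2, lt_of_le_of_lt h1 hη⟩
  -- the function f z = z⁻¹ * h z
  have hne0 : ∀ z ∈ U, z ≠ 0 := by
    intro z hz hc
    rw [hU] at hz
    rw [hc] at hz
    simp at hz
    nlinarith [hz.1]
  have hfd : DifferentiableOn ℂ (fun z : ℂ => z⁻¹ * h z) U :=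
    (differentiableOn_id.inv hne0).mul hhol
  have hM' : (M:ℂ) ≠ 0 := Nat.cast_ne_zero.mpr hM.ne'
  -- facts about z on sphere of radius ρ ≠ 1
  have hzM_ne : ∀ {z : ℂ}, ‖z‖ ≠ 1 → z ^ M ≠ 1 := by
    intro z hz hc
    have h1 : ‖z‖ ^ M = 1 := by rw [← norm_pow, hc, norm_one]
    rcases lt_trichotomy ‖z‖ 1 with hlt | heq | hgt
    · nlinarith [pow_lt_one₀ (norm_nonneg z) hlt hM.ne']
    · exact hz heq
    · nlinarith [one_lt_pow₀ hgt hM.ne']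
  have hzet_ne : ∀ {z : ℂ}, ‖z‖ ≠ 1 → ∀ k ∈ Finset.Icc 1 M, z ≠ zet M k := by
    intro z hz k _ hc
    exact hz (hc ▸ zet_abs M k)
  -- J expansion on circles of radius ρ
  have hJexp : ∀ ρ : ℝ, 0 < ρ → s ≤ ρ → ρ ≤ r → ρ ≠ 1 →
      (∮ z in C(0, ρ), (z ^ M - 1)⁻¹ * (z⁻¹ * h z))
        = ∑ k ∈ Finset.Icc 1 M, (zet M k / M) *
            ∮ z in C(0, ρ), (z - zet M k)⁻¹ * (z⁻¹ * h z) := by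
    intro ρ hρ0 hsρ hρr hρ1
    have hsphU' : sphere (0:ℂ) ρ ⊆ U :=
      hsphU (lt_of_lt_of_le hsη hsρ) (lt_of_le_of_lt hρr hrη)
    have hcf : ContinuousOn (fun z : ℂ => z⁻¹ * h z) (sphere (0:ℂ) ρ) :=
      hfd.continuousOn.mono hsphU'
    have hcongr : Set.EqOn (fun z : ℂ => (z ^ M - 1)⁻¹ * (z⁻¹ * h z))
        (fun z : ℂ => ∑ k ∈ Finset.Icc 1 M, (zet M k / M) * ((z - zet M k)⁻¹ * (z⁻¹ * h z)))
        (sphere (0:ℂ) ρ) := by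
      intro z hz
      have habs : ‖z‖ = ρ := habs_sphere hz
      have habs1 : ‖z‖ ≠ 1 := habs ▸ hρ1
      have hpf := partial_fractions M hM (hzet_ne habs1) (hzM_ne habs1)
      have hzM1 : z ^ M - 1 ≠ 0 := sub_ne_zero.mpr (hzM_ne habs1)
      simp only
      calc (z ^ M - 1)⁻¹ * (z⁻¹ * h z)
          = ((M:ℂ) / (z ^ M - 1)) * (z⁻¹ * h z) / M := by
            have hz0 : z ≠ 0 := hne0 z (hsphU' hz)
            field_simp
        _ = (∑ k ∈ Finset.Icc 1 M, zet M k / (z - zet M k)) * (z⁻¹ * h z) / M := by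
            rw [hpf]
        _ = ∑ k ∈ Finset.Icc 1 M, (zet M k / M) * ((z - zet M k)⁻¹ * (z⁻¹ * h z)) := by
            rw [Finset.sum_mul, Finset.sum_div]
            refine Finset.sum_congr rfl fun k hk => ?_
            have hzk : z - zet M k ≠ 0 := sub_ne_zero.mpr (hzet_ne habs1 k hk)
            have hz0 : z ≠ 0 := hne0 z (hsphU' hz)
            field_simp
    have hint : ∀ k ∈ Finset.Icc 1 M,
        CircleIntegrable (fun z : ℂ => (zet M k / M) * ((z - zet M k)⁻¹ * (z⁻¹ * h z))) 0 ρ := by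
      intro k hk
      apply ContinuousOn.circleIntegrable hρ0.le
      refine continuousOn_const.mul (ContinuousOn.mul ?_ hcf)
      refine (continuousOn_id.sub continuousOn_const).inv₀ fun z hz => sub_ne_zero.mpr ?_
      exact hzet_ne ((habs_sphere hz) ▸ hρ1) k hk
    rw [circleIntegral.integral_congr hρ0.le hcongr, circleIntegral_finset_sum _ _ _ _ hint]
    exact Finset.sum_congr rfl fun k hk => (circleIntegral.integral_const_mul _ _ _ _)
  -- residue identity
  have hres : (∮ z in C(0, r), (z ^ M - 1)⁻¹ * (z⁻¹ * h z))
      - (∮ z in C(0, s), (z ^ M - 1)⁻¹ * (z⁻¹ * h z))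
      = (2 * π * Complex.I / M) * ∑ k ∈ Finset.Icc 1 M, h (zet M k) := by
    rw [hJexp r hr0 hsr le_rfl hr1.ne', hJexp s hs0 le_rfl hsr hs1.ne,
      ← Finset.sum_sub_distrib, Finset.mul_sum]
    refine Finset.sum_congr rfl fun k hk => ?_
    rw [← mul_sub]
    have h2c := two_circles hUopen hfd hs0 hsr hsubr
      (a := zet M k) (by rw [zet_abs]; exact hs1) (by rw [zet_abs]; exact hr1)
    rw [h2c]
    have hzk0 : zet M k ≠ 0 := zet_ne_zero M k
    field_simp
  -- the integral identity
  have hI1 : (∮ z in C((0:ℂ), 1), z⁻¹ * h z) = ∮ z in C((0:ℂ), s), z⁻¹ * h z :=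
    Complex.circleIntegral_eq_of_differentiable_on_annulus_off_countable hs0 hs1.le
      Set.countable_empty (hfd.continuousOn.mono hsub1)
      (fun z hz => hfd.differentiableAt (hUopen.mem_nhds (hsub1
        ⟨ball_subset_closedBall hz.1.1, fun hc => hz.1.2 (ball_subset_closedBall hc)⟩)))
  have hInt : Complex.I * (∫ θ in (0:ℝ)..(2 * π), h (Complex.exp (θ * Complex.I)))
      = ∮ z in C((0:ℂ), s), z⁻¹ * h z := by
    rw [← hI1, circle_param]
  have hΛ0 : 0 ≤ Λ := by
    have h1 : ‖(1:ℂ)‖ = 1 := norm_one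
    exact le_trans (norm_nonneg (h 1))
      (hbd 1 (by rw [h1]; exact (div_lt_one hη0).mpr hη) (by rw [h1]; exact hη))
  set Sh := ∑ k ∈ Finset.Icc 1 M, h (zet M k) with hSh
  set Jr := ∮ z in C((0:ℂ), r), (z ^ M - 1)⁻¹ * (z⁻¹ * h z) with hJr
  set Js := ∮ z in C((0:ℂ), s), (z ^ M - 1)⁻¹ * (z⁻¹ * h z) with hJs2
  set Fs := ∮ z in C((0:ℂ), s), z⁻¹ * h z with hFs
  set Iv := ∫ θ in (0:ℝ)..(2 * π), h (Complex.exp (θ * Complex.I)) with hIv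
  have hE' : Complex.I * ((2 * ↑π / ↑M : ℂ) * Sh - Iv) = Jr - (Js + Fs) := by
    linear_combination (-1 : ℂ) * hres + (-1 : ℂ) * hInt
  have habsE : ‖(2 * ↑π / ↑M : ℂ) * Sh - Iv‖
      = ‖Jr - (Js + Fs)‖ := by
    rw [← hE', norm_mul, Complex.norm_I, one_mul]
  -- bound on Jr
  have hrM1 : (0:ℝ) < r ^ M - 1 := by linarith
  have hsM1 : (0:ℝ) < 1 - s ^ M := by linarith
  have hbdJr : ‖Jr‖ ≤ 2 * π * Λ / (r ^ M - 1) := by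
    have hb : ∀ z ∈ sphere (0:ℂ) r, ‖(z ^ M - 1)⁻¹ * (z⁻¹ * h z)‖
        ≤ (r ^ M - 1)⁻¹ * (r⁻¹ * Λ) := by
      intro z hz
      have habs : ‖z‖ = r := habs_sphere hz
      have hzU : z ∈ U := hsphU (lt_trans hsη (lt_of_le_of_lt hs1.le hr1)) hrη hz
      have h1 : r ^ M - 1 ≤ ‖z ^ M - 1‖ := by
        have := norm_sub_norm_le (z ^ M) (1:ℂ)
        simpa [norm_pow, habs] using this
      have h2 : ‖(z ^ M - 1)⁻¹‖ ≤ (r ^ M - 1)⁻¹ := by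
        rw [norm_inv]
        exact inv_anti₀ hrM1 h1
      have h3 : ‖h z‖ ≤ Λ := hbd z hzU.1 hzU.2
      have h4 : ‖z⁻¹‖ = r⁻¹ := by rw [norm_inv, habs]
      rw [norm_mul, norm_mul, h4]
      have hr' : (0:ℝ) ≤ r⁻¹ := inv_nonneg.mpr hr0.le
      have : r⁻¹ * ‖h z‖ ≤ r⁻¹ * Λ := mul_le_mul_of_nonneg_left h3 hr'
      exact mul_le_mul h2 this (by positivity) (by positivity)
    have := circleIntegral.norm_integral_le_of_norm_le_const hr0.le hb
    exact le_trans this (le_of_eq (scal_outer π r Λ M hr0 hrM))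
  -- bound on Js + Fs
  have hsphs : sphere (0:ℂ) s ⊆ U := hsphU hsη (lt_trans hs1 hη)
  have hint_a : CircleIntegrable (fun z : ℂ => (z ^ M - 1)⁻¹ * (z⁻¹ * h z)) 0 s := by
    apply ContinuousOn.circleIntegrable hs0.le
    refine ContinuousOn.mul ?_ (hfd.continuousOn.mono hsphs)
    refine ((continuousOn_pow M).sub continuousOn_const).inv₀ fun z hz => sub_ne_zero.mpr ?_
    exact hzM_ne ((habs_sphere hz) ▸ hs1.ne)
  have hint_b : CircleIntegrable (fun z : ℂ => (-1:ℂ) * (z⁻¹ * h z)) 0 s := by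
    apply ContinuousOn.circleIntegrable hs0.le
    exact continuousOn_const.mul (hfd.continuousOn.mono hsphs)
  have hcomb : Js + Fs = ∮ z in C((0:ℂ), s),
      ((z ^ M - 1)⁻¹ * (z⁻¹ * h z) - (-1:ℂ) * (z⁻¹ * h z)) := by
    rw [circleIntegral.integral_sub hint_a hint_b, circleIntegral.integral_const_mul]
    ring
  have hbdB : ‖Js + Fs‖ ≤ 2 * π * Λ / (r ^ M - 1) := by
    have hb : ∀ z ∈ sphere (0:ℂ) s, ‖(z ^ M - 1)⁻¹ * (z⁻¹ * h z) - (-1:ℂ) * (z⁻¹ * h z)‖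
        ≤ (s ^ M * (1 - s ^ M)⁻¹) * (s⁻¹ * Λ) := by
      intro z hz
      have habs : ‖z‖ = s := habs_sphere hz
      have hzU : z ∈ U := hsphs hz
      have hz0 : z ≠ 0 := hne0 z hzU
      have hzM1 : z ^ M - 1 ≠ 0 := sub_ne_zero.mpr (hzM_ne (habs ▸ hs1.ne))
      have heqn : (z ^ M - 1)⁻¹ * (z⁻¹ * h z) - (-1:ℂ) * (z⁻¹ * h z)
          = (z ^ M * (z ^ M - 1)⁻¹) * (z⁻¹ * h z) := by
        field_simp
        ring
      rw [heqn, norm_mul, norm_mul, norm_mul, norm_inv, norm_inv, norm_pow, habs]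
      have h1 : 1 - s ^ M ≤ ‖z ^ M - 1‖ := by
        have := norm_sub_norm_le (1:ℂ) (z ^ M)
        rw [norm_sub_rev] at this
        simpa [norm_pow, habs] using this
      have h2 : (‖z ^ M - 1‖)⁻¹ ≤ (1 - s ^ M)⁻¹ := by
        refine inv_anti₀ hsM1 ?_
        simpa [norm_pow, habs] using h1
      have h3 : ‖h z‖ ≤ Λ := hbd z hzU.1 hzU.2
      have hs' : (0:ℝ) ≤ s⁻¹ := inv_nonneg.mpr hs0.le
      have hmul1 : s⁻¹ * ‖h z‖ ≤ s⁻¹ * Λ := mul_le_mul_of_nonneg_left h3 hs'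
      have hmul2 : s ^ M * (‖z ^ M - 1‖)⁻¹ ≤ s ^ M * (1 - s ^ M)⁻¹ :=
        mul_le_mul_of_nonneg_left h2 (by positivity)
      exact mul_le_mul hmul2 hmul1 (by positivity) (by positivity)
    rw [hcomb]
    have := circleIntegral.norm_integral_le_of_norm_le_const hs0.le hb
    refine le_trans this (le_of_eq ?_)
    rw [hsdef]
    exact scal_inner π r Λ M hr0 hrM
  calc ‖(2 * ↑π / ↑M : ℂ) * Sh - Iv‖
      = ‖Jr - (Js + Fs)‖ := habsE
    _ ≤ ‖Jr‖ + ‖Js + Fs‖ := by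
        exact norm_sub_le _ _
    _ ≤ 2 * π * Λ / (r ^ M - 1) + 2 * π * Λ / (r ^ M - 1) := add_le_add hbdJr hbdB
    _ = 4 * π * Λ / (r ^ M - 1) := by ring


/-- exponentially convergent trapezoidal rule. If `h` is
holomorphic and bounded by `Λ` on the annulus `{1/η < |z| < η}` with `η > 1`,
and `g(θ) = h(e^{iθ})`, then the `M`-point equispaced trapezoidal rule
approximates `∫_0^{2π} g` with error at most `4πΛ/(η^M - 1)`. -/
theorem stmt9 (η Λ : ℝ) (hη : 1 < η) (h : ℂ → ℂ)
    (hhol : DifferentiableOn ℂ h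
      {z : ℂ | 1 / η < ‖z‖ ∧ ‖z‖ < η})
    (hbd : ∀ z : ℂ, 1 / η < ‖z‖ → ‖z‖ < η →
      ‖h z‖ ≤ Λ)
    (g : ℝ → ℂ) (hg : ∀ θ : ℝ, g θ = h (Complex.exp (θ * Complex.I)))
    (M : ℕ) (hM : 0 < M) :
    ‖((2 * π / M) * ∑ k ∈ Finset.Icc 1 M, g (2 * π * k / M) -
        ∫ θ in (0 : ℝ)..(2 * π), g θ)‖ ≤
      4 * π * Λ / (η ^ M - 1) := by
  have hπ : (0:ℝ) < π := Real.pi_pos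
  have hsum : ∑ k ∈ Finset.Icc 1 M, g (2 * π * k / M)
      = ∑ k ∈ Finset.Icc 1 M, h (zet M k) :=
    Finset.sum_congr rfl fun k _ => by rw [hg]; rfl
  have hint : (∫ θ in (0:ℝ)..(2 * π), g θ)
      = ∫ θ in (0:ℝ)..(2 * π), h (Complex.exp (θ * Complex.I)) :=
    intervalIntegral.integral_congr fun θ _ => hg θ
  rw [hsum, hint]
  have hkey : ∀ r ∈ Set.Ioo (1:ℝ) η,
      ‖(2 * π / M) * ∑ k ∈ Finset.Icc 1 M, h (zet M k) -
        ∫ θ in (0:ℝ)..(2 * π), h (Complex.exp (θ * Complex.I))‖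
        ≤ 4 * π * Λ / (r ^ M - 1) :=
    fun r hr => key_bound η Λ hη h hhol hbd M hM hr.1 hr.2
  have hηM : 1 < η ^ M := one_lt_pow₀ hη hM.ne'
  have hconv : Filter.Tendsto (fun r : ℝ => 4 * π * Λ / (r ^ M - 1))
      (nhdsWithin η (Set.Ioo 1 η)) (nhds (4 * π * Λ / (η ^ M - 1))) := by
    apply Filter.Tendsto.mono_left ?_ nhdsWithin_le_nhds
    exact Filter.Tendsto.div tendsto_const_nhds
      (((continuous_pow M).tendsto η).sub tendsto_const_nhds) (by intro hc; nlinarith [hc])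
  have hne : (nhdsWithin η (Set.Ioo 1 η)).NeBot := by
    refine mem_closure_iff_nhdsWithin_neBot.mp ?_
    rw [closure_Ioo (ne_of_lt hη)]
    exact ⟨hη.le, le_rfl⟩
  refine ge_of_tendsto hconv ?_
  filter_upwards [eventually_mem_nhdsWithin] with r hr
  exact hkey r hr
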